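/- Let s, M, Z be real numbers with Z > 0 and M > −1. Define G : ℝ⁴ → ℝ by G(x) = 1/(Z·e^{2s}·(1+M)) if ‖x‖ ≤ e^{s}, and G(x) = 1/(Z·(‖x‖² + e^{2s}·M)) if ‖x‖ > e^{s}. Then G³ is integrable on ℝ⁴ and ∫_{ℝ⁴} G(x)³ dx = (π²·(M+2)·e^{−2s})/(2·(M+1)²·Z³) + (π²·e^{−2s})/(2·(M+1)³·Z³). -/

import Mathlib

open Real MeasureTheory

/-- The regulated Litim propagator at dimensionless mass `M`: constant
`1/(Ze^{2s}(1+M))` inside the ball of radius `e^s`, and `1/(Z(‖x‖²+e^{2s}M))`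
outside. -/
noncomputable def litimPropagator (s M Z : ℝ) (x : EuclideanSpace ℝ (Fin 4)) : ℝ :=
  if ‖x‖ ≤ exp s then 1 / (Z * exp (2 * s) * (1 + M))
  else 1 / (Z * (‖x‖ ^ 2 + exp (2 * s) * M))

open Set

lemma radial_outer (R a M Z : ℝ) (hR : 0 < R) (ha : R ^ 2 = a) (hZ : 0 < Z) (hM : -1 < M) :
    IntegrableOn (fun r : ℝ => r ^ 3 * (1 / (Z * (r ^ 2 + a * M))) ^ 3) (Ioi R) ∧
    ∫ r in Ioi R, r ^ 3 * (1 / (Z * (r ^ 2 + a * M))) ^ 3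
      = (M + 2) / (4 * Z ^ 3 * a * (M + 1) ^ 2) := by
  have ha0 : 0 < a := ha ▸ pow_pos hR 2
  have hM1 : 0 < 1 + M := by linarith
  set g : ℝ → ℝ := fun r => (-(1 / (2 * Z ^ 3))) * (r ^ 2 + a * M)⁻¹
      + (a * M / (4 * Z ^ 3)) * ((r ^ 2 + a * M)⁻¹) ^ 2 with hg
  have hden : ∀ r ∈ Ici R, 0 < r ^ 2 + a * M := by
    intro r hr
    have h1 : a ≤ r ^ 2 := by
      rw [← ha]; exact pow_le_pow_left₀ hR.le hr 2
    nlinarith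
  have hderiv : ∀ r ∈ Ici R, HasDerivAt g (r ^ 3 * (1 / (Z * (r ^ 2 + a * M))) ^ 3) r := by
    intro r hr
    have h0 : r ^ 2 + a * M ≠ 0 := (hden r hr).ne'
    have H1 : HasDerivAt (fun r : ℝ => r ^ 2 + a * M) (2 * r) r := by
      simpa using (hasDerivAt_pow 2 r).add_const (a * M)
    have H2 : HasDerivAt (fun r : ℝ => (r ^ 2 + a * M)⁻¹)
        (-(2 * r) / (r ^ 2 + a * M) ^ 2) r := H1.inv h0
    have H3 : HasDerivAt (fun r : ℝ => ((r ^ 2 + a * M)⁻¹) ^ 2)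
        (((2 : ℕ) : ℝ) * ((r ^ 2 + a * M)⁻¹) ^ 1 * (-(2 * r) / (r ^ 2 + a * M) ^ 2)) r := H2.pow 2
    have H := ((H2.const_mul (-(1 / (2 * Z ^ 3)))).add (H3.const_mul (a * M / (4 * Z ^ 3))))
    refine H.congr_deriv ?_
    field_simp
    ring
  have hpos : ∀ r ∈ Ioi R, 0 ≤ r ^ 3 * (1 / (Z * (r ^ 2 + a * M))) ^ 3 := by
    intro r hr
    have hr0 : 0 < r := lt_trans hR hr
    have := hden r (mem_Ici.2 (le_of_lt (mem_Ioi.1 hr)))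
    positivity
  have hlim : Filter.Tendsto g Filter.atTop (nhds 0) := by
    have hh : Filter.Tendsto (fun r : ℝ => r ^ 2 + a * M) Filter.atTop Filter.atTop :=
      Filter.tendsto_atTop_add_const_right _ (a * M) (Filter.tendsto_pow_atTop two_ne_zero)
    have hinv : Filter.Tendsto (fun r : ℝ => (r ^ 2 + a * M)⁻¹) Filter.atTop (nhds 0) :=
      hh.inv_tendsto_atTop
    have := ((hinv.const_mul (-(1 / (2 * Z ^ 3)))).add
      ((hinv.pow 2).const_mul (a * M / (4 * Z ^ 3))))
    rw [hg]
    convert this using 2 with r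
    simp
  refine ⟨integrableOn_Ioi_deriv_of_nonneg' hderiv hpos hlim, ?_⟩
  rw [integral_Ioi_of_hasDerivAt_of_nonneg' hderiv hpos hlim]
  have hRa : R ^ 2 + a * M = a * (1 + M) := by rw [ha]; ring
  rw [hg]
  simp only [hRa]
  have hZ' : Z ≠ 0 := hZ.ne'
  have hM' : M + 1 ≠ 0 := by linarith
  have hM'' : 1 + M ≠ 0 := by linarith
  have ha' : a ≠ 0 := ha0.ne'
  rw [zero_sub]
  field_simp
  ring

/-- volume of the unit ball in ℝ⁴ -/
lemma vol_ball_four :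
    (volume (Metric.ball (0 : EuclideanSpace ℝ (Fin 4)) 1)).toReal = π ^ 2 / 2 := by
  rw [EuclideanSpace.volume_ball]
  have hcard : Fintype.card (Fin 4) = 4 := by simp
  rw [hcard]
  have h1 : ((4 : ℕ) : ℝ) / 2 + 1 = (2 : ℕ) + 1 := by norm_num
  have h2 : Real.Gamma (((4 : ℕ) : ℝ) / 2 + 1) = 2 := by
    rw [h1, Real.Gamma_nat_eq_factorial]; norm_num
  have h3 : Real.sqrt π ^ 4 = π ^ 2 := by
    rw [show (4 : ℕ) = 2 * 2 from rfl, pow_mul, Real.sq_sqrt Real.pi_nonneg]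
  rw [h2, h3, ENNReal.ofReal_one, one_pow, one_mul, ENNReal.toReal_ofReal (by positivity)]

/-- the cube of the regulated propagator is integrable on `ℝ⁴` and
`∫ G³ = π²(M+2)e^{-2s}/(2(M+1)²Z³) + π²e^{-2s}/(2(M+1)³Z³)` (the loop quantity
`𝒜₄,₃` in the integral approximation). -/
theorem litim_propagator_cube_integral
    (s M Z : ℝ) (hZ : 0 < Z) (hM : -1 < M) :
    Integrable (fun x : EuclideanSpace ℝ (Fin 4) => (litimPropagator s M Z x) ^ 3) ∧
    (∫ x : EuclideanSpace ℝ (Fin 4), (litimPropagator s M Z x) ^ 3)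
      = π ^ 2 * (M + 2) * exp (-2 * s) / (2 * (M + 1) ^ 2 * Z ^ 3)
        + π ^ 2 * exp (-2 * s) / (2 * (M + 1) ^ 3 * Z ^ 3) := by
  have hM1 : 0 < 1 + M := by linarith
  set R : ℝ := exp s with hRdef
  set a : ℝ := exp (2 * s) with hadef
  have hR0 : 0 < R := exp_pos s
  have ha0 : 0 < a := exp_pos _
  have haR : R ^ 2 = a := by
    rw [hRdef, hadef, pow_two, ← Real.exp_add, two_mul]
  -- nonnegativity and upper bound of G
  have hGnn : ∀ x : EuclideanSpace ℝ (Fin 4), 0 ≤ litimPropagator s M Z x := by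
    intro x
    unfold litimPropagator
    split_ifs with h
    · positivity
    · push_neg at h
      have h2 : a < ‖x‖ ^ 2 := by
        rw [← haR]; exact pow_lt_pow_left₀ h hR0.le two_ne_zero
      have hd : 0 < ‖x‖ ^ 2 + a * M := by nlinarith
      positivity
  set m : ℝ := min 1 (1 + M) with hmdef
  have hm : 0 < m := lt_min one_pos hM1
  set D : ℝ := max ((1 + R) ^ 2 / (Z * a * (1 + M))) ((1 + 1 / R) ^ 2 / (Z * m)) with hDdef
  have hD0 : 0 < D := lt_max_of_lt_left (by positivity)
  have hGle : ∀ x : EuclideanSpace ℝ (Fin 4),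
      litimPropagator s M Z x ≤ D / (1 + ‖x‖) ^ 2 := by
    intro x
    have hx0 : (0 : ℝ) ≤ ‖x‖ := norm_nonneg x
    have hx1 : (0 : ℝ) < 1 + ‖x‖ := by linarith
    unfold litimPropagator
    split_ifs with h
    · rw [div_le_div_iff₀ (by positivity) (by positivity), one_mul]
      calc (1 + ‖x‖) ^ 2 ≤ (1 + R) ^ 2 := by nlinarith
        _ = (1 + R) ^ 2 / (Z * a * (1 + M)) * (Z * a * (1 + M)) := by field_simp
        _ ≤ D * (Z * a * (1 + M)) := by
            have hle := le_max_left ((1 + R) ^ 2 / (Z * a * (1 + M))) ((1 + 1 / R) ^ 2 / (Z * m))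
            rw [← hDdef] at hle
            exact mul_le_mul_of_nonneg_right hle (by positivity)
    · push_neg at h
      have hxR : R < ‖x‖ := h
      have h2 : a < ‖x‖ ^ 2 := by
        rw [← haR]; exact pow_lt_pow_left₀ h hR0.le two_ne_zero
      have hden : m * ‖x‖ ^ 2 ≤ ‖x‖ ^ 2 + a * M := by
        rcases le_or_gt 0 M with hM0 | hM0
        · have : m ≤ 1 := min_le_left _ _
          nlinarith
        · have : m ≤ 1 + M := min_le_right _ _
          nlinarith
      have hx2 : 0 < ‖x‖ := lt_trans hR0 hxR
      have hd : 0 < ‖x‖ ^ 2 + a * M := lt_of_lt_of_le (by positivity) hden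
      rw [div_le_div_iff₀ (by positivity) (by positivity), one_mul]
      have hnorm : 1 + ‖x‖ ≤ ‖x‖ * (1 + 1 / R) := by
        rw [mul_add, mul_one, mul_one_div]
        have : 1 ≤ ‖x‖ / R := (one_le_div hR0).2 hxR.le
        linarith
      calc (1 + ‖x‖) ^ 2 ≤ (‖x‖ * (1 + 1 / R)) ^ 2 := by
            apply pow_le_pow_left₀ hx1.le hnorm
        _ = (1 + 1 / R) ^ 2 / (Z * m) * (Z * (m * ‖x‖ ^ 2)) := by field_simp
        _ ≤ D * (Z * (‖x‖ ^ 2 + a * M)) := by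
            have hDm := le_max_right ((1 + R) ^ 2 / (Z * a * (1 + M))) ((1 + 1 / R) ^ 2 / (Z * m))
            rw [← hDdef] at hDm
            have h1 : Z * (m * ‖x‖ ^ 2) ≤ Z * (‖x‖ ^ 2 + a * M) :=
              mul_le_mul_of_nonneg_left hden hZ.le
            have h2' : (0 : ℝ) ≤ Z * (m * ‖x‖ ^ 2) := by positivity
            calc (1 + 1 / R) ^ 2 / (Z * m) * (Z * (m * ‖x‖ ^ 2))
                ≤ D * (Z * (m * ‖x‖ ^ 2)) := mul_le_mul_of_nonneg_right hDm h2'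
              _ ≤ D * (Z * (‖x‖ ^ 2 + a * M)) := mul_le_mul_of_nonneg_left h1 hD0.le
  -- measurability
  have hmeas : Measurable (litimPropagator s M Z) := by
    unfold litimPropagator
    exact Measurable.ite (measurableSet_le measurable_norm measurable_const) measurable_const
      (measurable_const.div (((measurable_norm.pow_const 2).add_const _).const_mul Z))
  -- integrability
  have hfinrank : ((Module.finrank ℝ (EuclideanSpace ℝ (Fin 4)) : ℝ)) < 6 := by
    rw [finrank_euclideanSpace_fin]; norm_num
  have hmaj : Integrable (fun x : EuclideanSpace ℝ (Fin 4) =>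
      D ^ 3 * (1 + ‖x‖) ^ (-(6 : ℝ))) := (integrable_one_add_norm hfinrank).const_mul _
  have hInt : Integrable (fun x : EuclideanSpace ℝ (Fin 4) => (litimPropagator s M Z x) ^ 3) := by
    refine hmaj.mono' ((hmeas.pow_const 3).aestronglyMeasurable) (ae_of_all _ fun x => ?_)
    have hx1 : (0 : ℝ) < 1 + ‖x‖ := by positivity
    have hrpow : (1 + ‖x‖) ^ (-(6 : ℝ)) = ((1 + ‖x‖) ^ (6 : ℕ))⁻¹ := by
      rw [← Real.rpow_natCast (1 + ‖x‖) 6, ← Real.rpow_neg hx1.le]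
      norm_num
    rw [Real.norm_eq_abs, abs_of_nonneg (pow_nonneg (hGnn x) 3), hrpow]
    calc (litimPropagator s M Z x) ^ 3 ≤ (D / (1 + ‖x‖) ^ 2) ^ 3 :=
        pow_le_pow_left₀ (hGnn x) (hGle x) 3
      _ = D ^ 3 * ((1 + ‖x‖) ^ (6 : ℕ))⁻¹ := by
          rw [div_pow, ← pow_mul, div_eq_mul_inv]
  refine ⟨hInt, ?_⟩
  -- the radial profile
  set f : ℝ → ℝ := fun r =>
    (if r ≤ R then 1 / (Z * a * (1 + M)) else 1 / (Z * (r ^ 2 + a * M))) ^ 3 with hfdef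
  have hGf : (fun x : EuclideanSpace ℝ (Fin 4) => (litimPropagator s M Z x) ^ 3)
      = fun x => f ‖x‖ := by
    funext x
    simp only [hfdef, litimPropagator, hRdef, hadef]
  rw [hGf, integral_fun_norm_addHaar volume f]
  simp only [finrank_euclideanSpace_fin, measureReal_def, vol_ball_four, nsmul_eq_mul, smul_eq_mul]
  -- radial integral
  obtain ⟨hout_int, hout_val⟩ := radial_outer R a M Z hR0 haR hZ hM
  have hsplit : Ioi (0 : ℝ) = Ioc 0 R ∪ Ioi R := (Ioc_union_Ioi_eq_Ioi hR0.le).symm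
  have e1 : EqOn (fun y : ℝ => y ^ 3 * f y)
      (fun y => y ^ 3 * (1 / (Z * a * (1 + M))) ^ 3) (Ioc 0 R) := by
    intro y hy; simp only [hfdef, if_pos hy.2]
  have e2 : EqOn (fun y : ℝ => y ^ 3 * f y)
      (fun y => y ^ 3 * (1 / (Z * (y ^ 2 + a * M))) ^ 3) (Ioi R) := by
    intro y hy; simp only [hfdef, if_neg (not_le.2 (mem_Ioi.1 hy))]
  have int1 : IntegrableOn (fun y : ℝ => y ^ 3 * f y) (Ioc 0 R) := by
    refine (IntegrableOn.congr_fun ?_ e1.symm measurableSet_Ioc)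
    exact ((continuous_pow 3).mul continuous_const).integrableOn_Ioc
  have int2 : IntegrableOn (fun y : ℝ => y ^ 3 * f y) (Ioi R) :=
    hout_int.congr_fun e2.symm measurableSet_Ioi
  have hval1 : ∫ y in Ioc (0 : ℝ) R, y ^ 3 * f y
      = (1 / (Z * a * (1 + M))) ^ 3 * (R ^ 4 / 4) := by
    rw [setIntegral_congr_fun measurableSet_Ioc e1, ← intervalIntegral.integral_of_le hR0.le]
    rw [intervalIntegral.integral_mul_const, integral_pow]
    norm_num; ring
  have hval2 : ∫ y in Ioi R, y ^ 3 * f y = (M + 2) / (4 * Z ^ 3 * a * (M + 1) ^ 2) := by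
    rw [setIntegral_congr_fun measurableSet_Ioi e2, hout_val]
  have key : ∫ y in Ioi (0 : ℝ), y ^ 3 * f y
      = (1 / (Z * a * (1 + M))) ^ 3 * (R ^ 4 / 4) + (M + 2) / (4 * Z ^ 3 * a * (M + 1) ^ 2) := by
    rw [hsplit, setIntegral_union (Ioc_disjoint_Ioi le_rfl) measurableSet_Ioi int1 int2,
      hval1, hval2]
  rw [show (4 - 1 : ℕ) = 3 from rfl, key]
  -- final numerics
  have hexp : exp (-2 * s) = a⁻¹ := by
    rw [hadef, ← Real.exp_neg]; ring_nf
  have hR4 : R ^ 4 = a ^ 2 := by rw [← haR]; ring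
  rw [hexp, hR4]
  push_cast
  have hZ' : Z ≠ 0 := hZ.ne'
  have hM' : M + 1 ≠ 0 := by linarith
  have hM'' : 1 + M ≠ 0 := by linarith
  have ha' : a ≠ 0 := ha0.ne'
  field_simp
  ring
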